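/- For any ab-word w and any k ≥ 1, the chromatic polynomials of Ferrers graphs satisfy the recursion χ(w b a^{k−1}) = t · χ(w a^{k−1}) + Σ_{i=0}^{k−1} (−1)^{k−i} · C(k,i) · χ(w a^i). -/

import Mathlib

open SimpleGraph Finset

/-- The Ferrers graph on parts `Fin (n+1)` (the `u` vertices) and `Fin (m+1)`
(the `v` vertices), where `u i` is adjacent to `v j` iff `j < lam i`. -/
def ferrersGraph (n m : ℕ) (lam : Fin (n+1) → ℕ) :
    SimpleGraph (Fin (n+1) ⊕ Fin (m+1)) where
  Adj x y :=
    match x, y with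
    | Sum.inl i, Sum.inr j => (j : ℕ) < lam i
    | Sum.inr j, Sum.inl i => (j : ℕ) < lam i
    | _, _ => False
  symm := ⟨by rintro (i|j) (i'|j') h <;> simp_all⟩
  loopless := ⟨by rintro (i|j) h <;> simp_all⟩

/-- Reading an `ab`-word (`a = false` is a vertical step, `b = true` a horizontal
step) along the boundary of a Ferrers diagram from the bottom right corner,
`rowLensAux w c` returns the list of row lengths from the bottom row up, where
`c` is one more than the number of horizontal steps already taken. -/
def rowLensAux : List Bool → ℕ → List ℕ
  | [], c => [c]
  | true :: w, c => rowLensAux w (c+1)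
  | false :: w, c => c :: rowLensAux w c

/-- The row lengths `λ_0 ≥ λ_1 ≥ ⋯ ≥ λ_n` of the Ferrers diagram of the
`ab`-word `w`, from the top row down. -/
def lamList (w : List Bool) : List ℕ := (rowLensAux w 1).reverse

/-- The `i`-th row length of the Ferrers diagram of the `ab`-word `w`. -/
def lamW (w : List Bool) (i : ℕ) : ℕ := (lamList w).getD i 0

/-- The Ferrers graph associated to an `ab`-word `w`; it has `w.count false + 1`
vertices `u_i` and `w.count true + 1` vertices `v_j`. -/
def wordGraph (w : List Bool) :
    SimpleGraph (Fin (w.count false + 1) ⊕ Fin (w.count true + 1)) :=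
  ferrersGraph _ _ (fun i => lamW w i)

/-- The number of permutations of `S_{k+1}` (`k` the length of the word `w`)
whose excedance word is `w`: position `i` (zero-indexed, `i < k`) carries the
letter `b` (`true`) exactly when `π i > i`. -/
noncomputable def exStat (w : List Bool) : ℕ :=
  Nat.card {π : Equiv.Perm (Fin (w.length + 1)) //
    ∀ i : Fin w.length, (w.get i = true ↔ i.castSucc < π i.castSucc)}

def Tw (w : List Bool) : List ℕ := ((rowLensAux w 1).dropLast).reverse
def filtCard (t : ℕ) {q : ℕ} (L : ℕ) (g : Fin q → Fin t) : ℕ :=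
  (univ.filter fun x : Fin t => ∀ j : Fin q, (j : ℕ) < L → x ≠ g j).card
def Rfun (t n : ℕ) (T : List ℕ) {q : ℕ} (g : Fin q → Fin t) : ℕ :=
  ∏ idx ∈ Finset.range n, filtCard t (T.getD idx 0) g

lemma rowLensAux_ne_nil (w : List Bool) (c : ℕ) : rowLensAux w c ≠ [] := by
  induction w generalizing c with
  | nil => simp [rowLensAux]
  | cons b w ih => cases b <;> simp [rowLensAux, ih]

lemma rowLensAux_length (w : List Bool) (c : ℕ) :
    (rowLensAux w c).length = w.count false + 1 := by
  induction w generalizing c with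
  | nil => simp [rowLensAux]
  | cons b w ih => cases b <;> simp [rowLensAux, ih, List.count_cons]

lemma rowLensAux_le (w : List Bool) (c : ℕ) :
    ∀ x ∈ rowLensAux w c, x ≤ c + w.count true := by
  induction w generalizing c with
  | nil => simp [rowLensAux]
  | cons b w ih =>
    cases b <;> intro x hx <;>
      simp only [rowLensAux, List.count_cons, List.mem_cons, beq_iff_eq, reduceIte] at *
    · rcases hx with rfl | hx
      · omega
      · have := ih c x hx; omega
    · have := ih (c+1) x hx; omega

lemma rowLensAux_append (v s : List Bool) (c : ℕ) :
    rowLensAux (v ++ s) c = (rowLensAux v c).dropLast ++ rowLensAux s (c + v.count true) := by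
  induction v generalizing c with
  | nil => simp [rowLensAux]
  | cons b v ih =>
    cases b
    · rw [List.cons_append]
      show c :: rowLensAux (v ++ s) c = _
      rw [ih, show rowLensAux (false :: v) c = c :: rowLensAux v c from rfl,
        List.dropLast_cons_of_ne_nil (rowLensAux_ne_nil v c)]
      simp [List.count_cons]
    · rw [List.cons_append]
      show rowLensAux (v ++ s) (c+1) = _
      rw [ih]
      have : c + 1 + v.count true = c + (true :: v).count true := by
        simp [List.count_cons]; omega
      rw [this]
      rfl

lemma rowLensAux_replicate (i c : ℕ) :
    rowLensAux (List.replicate i false) c = List.replicate (i+1) c := by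
  induction i with
  | zero => simp [rowLensAux]
  | succ i ih =>
    rw [List.replicate_succ]
    show c :: rowLensAux (List.replicate i false) c = _
    rw [ih]
    rfl

lemma Tw_length (w : List Bool) : (Tw w).length = w.count false := by
  simp [Tw, rowLensAux_length]

lemma Tw_le (w : List Bool) (idx : ℕ) : (Tw w).getD idx 0 ≤ w.count true + 1 := by
  by_cases h : idx < (Tw w).length
  · rw [List.getD_eq_getElem _ _ h]
    have hm : (Tw w)[idx] ∈ Tw w := List.getElem_mem _
    have : (Tw w)[idx] ∈ rowLensAux w 1 := by
      have := List.mem_reverse.mp hm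
      exact List.dropLast_subset _ this
    have := rowLensAux_le w 1 _ this
    omega
  · rw [List.getD_eq_default _ _ (by omega)]
    omega

lemma lamList_rep (w : List Bool) (i : ℕ) :
    lamList (w ++ List.replicate i false)
      = List.replicate (i+1) (w.count true + 1) ++ Tw w := by
  unfold lamList Tw
  rw [rowLensAux_append, rowLensAux_replicate, List.reverse_append, List.reverse_replicate]
  congr 2
  omega

lemma lamList_brep (w : List Bool) (k : ℕ) (hk : 1 ≤ k) :
    lamList (w ++ true :: List.replicate (k-1) false)
      = List.replicate k (w.count true + 2) ++ Tw w := by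
  unfold lamList Tw
  rw [rowLensAux_append]
  have : rowLensAux (true :: List.replicate (k-1) false) (1 + w.count true)
      = List.replicate k (w.count true + 2) := by
    show rowLensAux (List.replicate (k-1) false) (1 + w.count true + 1) = _
    rw [rowLensAux_replicate]
    congr 1 <;> omega
  rw [this, List.reverse_append, List.reverse_replicate]

lemma lamW_rep_lt (w : List Bool) (i idx : ℕ) (h : idx < i + 1) :
    lamW (w ++ List.replicate i false) idx = w.count true + 1 := by
  unfold lamW
  rw [lamList_rep, List.getD_append _ _ _ _ (by simpa using h)]
  rw [List.getD_eq_getElem _ _ (by simpa using h)]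
  simp

lemma lamW_rep_ge (w : List Bool) (i idx : ℕ) :
    lamW (w ++ List.replicate i false) (i + 1 + idx) = (Tw w).getD idx 0 := by
  unfold lamW
  rw [lamList_rep, List.getD_append_right _ _ _ _ (by simp)]
  simp

lemma lamW_brep_lt (w : List Bool) (k idx : ℕ) (hk : 1 ≤ k) (h : idx < k) :
    lamW (w ++ true :: List.replicate (k-1) false) idx = w.count true + 2 := by
  unfold lamW
  rw [lamList_brep w k hk, List.getD_append _ _ _ _ (by simpa using h)]
  rw [List.getD_eq_getElem _ _ (by simpa using h)]
  simp

lemma lamW_brep_ge (w : List Bool) (k idx : ℕ) (hk : 1 ≤ k) :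
    lamW (w ++ true :: List.replicate (k-1) false) (k + idx) = (Tw w).getD idx 0 := by
  unfold lamW
  rw [lamList_brep w k hk, List.getD_append_right _ _ _ _ (by simp)]
  simp

def colEquiv (n m t : ℕ) (lam : Fin (n+1) → ℕ) :
    ((ferrersGraph n m lam).Coloring (Fin t)) ≃
      (Σ g : Fin (m+1) → Fin t, ∀ i : Fin (n+1),
        {x : Fin t // ∀ j : Fin (m+1), (j : ℕ) < lam i → x ≠ g j}) where
  toFun C := ⟨fun j => C (Sum.inr j), fun i =>
    ⟨C (Sum.inl i), fun j hj => C.valid hj⟩⟩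
  invFun p := SimpleGraph.Coloring.mk (Sum.elim (fun i => (p.2 i).1) p.1) (by
    rintro (i|j) (i'|j') hadj
    · exact absurd hadj (by simp [ferrersGraph])
    · exact (p.2 i).2 j' hadj
    · exact fun he => ((p.2 i').2 j hadj) he.symm
    · exact absurd hadj (by simp [ferrersGraph]))
  left_inv C := by
    ext v
    cases v <;> rfl
  right_inv p := rfl

lemma card_colorings (n m t : ℕ) (lam : Fin (n+1) → ℕ) :
    Nat.card ((ferrersGraph n m lam).Coloring (Fin t)) =
      ∑ g : Fin (m+1) → Fin t, ∏ i : Fin (n+1), filtCard t (lam i) g := by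
  rw [Nat.card_congr (colEquiv n m t lam), Nat.card_eq_fintype_card, Fintype.card_sigma]
  refine Finset.sum_congr rfl fun g _ => ?_
  rw [Fintype.card_pi]
  refine Finset.prod_congr rfl fun i _ => ?_
  rw [Fintype.card_subtype]
  rfl

lemma filtCard_ge (t q L : ℕ) (hL : q ≤ L) (g : Fin q → Fin t) :
    filtCard t L g = t - (univ.image g).card := by
  unfold filtCard
  have h : (univ.filter fun x : Fin t => ∀ j : Fin q, (j : ℕ) < L → x ≠ g j)
      = univ \ univ.image g := by
    ext x
    simp only [mem_filter, mem_univ, true_and, mem_sdiff, mem_image, not_exists]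
    constructor
    · intro h j
      exact fun he => (h j (lt_of_lt_of_le j.2 hL)) he.symm
    · intro h j _
      exact fun he => (h j) he.symm
  rw [h, Finset.card_sdiff_of_subset (Finset.subset_univ _), Finset.card_univ, Fintype.card_fin]

lemma filtCard_snoc (t L : ℕ) {q : ℕ} (hL : L ≤ q) (g : Fin q → Fin t) (x : Fin t) :
    filtCard t L (Fin.snoc g x : Fin (q+1) → Fin t) = filtCard t L g := by
  unfold filtCard
  congr 1
  ext y
  simp only [mem_filter, mem_univ, true_and]
  constructor
  · intro h j hj
    have := h j.castSucc (by simpa using hj)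
    rwa [Fin.snoc_castSucc] at this
  · intro h j hj
    have hlt : (j : ℕ) < q := lt_of_lt_of_le hj hL
    have hj' : j = Fin.castSucc ⟨(j : ℕ), hlt⟩ := by
      apply Fin.ext; rfl
    rw [hj', Fin.snoc_castSucc]
    exact h _ hj

lemma Rfun_snoc (t n : ℕ) (T : List ℕ) {q : ℕ} (hT : ∀ idx, T.getD idx 0 ≤ q)
    (g : Fin q → Fin t) (x : Fin t) :
    Rfun t n T (Fin.snoc g x : Fin (q+1) → Fin t) = Rfun t n T g :=
  Finset.prod_congr rfl fun idx _ => filtCard_snoc t _ (hT idx) g x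

lemma image_snoc {q t : ℕ} (g : Fin q → Fin t) (x : Fin t) :
    Finset.univ.image (Fin.snoc g x : Fin (q+1) → Fin t)
      = insert x (Finset.univ.image g) := by
  ext y
  simp only [mem_image, mem_univ, true_and, mem_insert]
  constructor
  · rintro ⟨j, hj⟩
    cases j using Fin.lastCases with
    | last => rw [Fin.snoc_last] at hj; exact Or.inl hj.symm
    | cast j => rw [Fin.snoc_castSucc] at hj; exact Or.inr ⟨j, hj⟩
  · rintro (rfl | ⟨j, rfl⟩)
    · exact ⟨Fin.last q, Fin.snoc_last _ _⟩
    · exact ⟨j.castSucc, Fin.snoc_castSucc _ _ _⟩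

lemma sum_shape (t r n : ℕ) (T : List ℕ) {q q' : ℕ} (h : q = q') :
    (∑ g : Fin q → Fin t, (t - (Finset.univ.image g).card) ^ r * Rfun t n T g)
      = ∑ g : Fin q' → Fin t, (t - (Finset.univ.image g).card) ^ r * Rfun t n T g := by
  subst h; rfl

lemma scalar_id (t s k : ℕ) (hs : s ≤ t) :
    (s : ℤ) * ((t:ℤ) - s)^k + ((t:ℤ) - s) * ((t:ℤ) - s - 1)^k
      = (t:ℤ) * ((t:ℤ) - s)^k
        + ∑ i ∈ range k, (-1:ℤ)^(k-i) * (k.choose i) * ((t:ℤ) - s)^(i+1) := by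
  set u : ℤ := (t:ℤ) - s with hu
  have h1 : (u - 1)^k = ∑ i ∈ range (k+1), (-1:ℤ)^(k-i) * (k.choose i) * u^i := by
    rw [sub_pow]
    refine Finset.sum_congr rfl fun i hi => ?_
    have hik : i ≤ k := Nat.lt_succ_iff.mp (mem_range.mp hi)
    have : (-1:ℤ)^(i+k) = (-1)^(k-i) := by
      rw [show i + k = (k - i) + 2 * i by omega, pow_add, pow_mul]
      simp
    rw [one_pow, this]
    ring
  have h2 : u * (u-1)^k = ∑ i ∈ range (k+1), (-1:ℤ)^(k-i) * (k.choose i) * u^(i+1) := by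
    rw [h1, Finset.mul_sum]
    exact Finset.sum_congr rfl fun i _ => by ring
  have hst : (s:ℤ) = (t:ℤ) - u := by rw [hu]; ring
  rw [hst, h2, Finset.sum_range_succ]
  simp only [Nat.choose_self, Nat.sub_self, pow_zero, Nat.cast_one]
  ring

lemma P_eq (w : List Bool) (i t : ℕ) :
    Nat.card ((wordGraph (w ++ List.replicate i false)).Coloring (Fin t)) =
      ∑ g : Fin (w.count true + 1) → Fin t,
        (t - (Finset.univ.image g).card) ^ (i+1) * Rfun t (w.count false) (Tw w) g := by
  set w' := w ++ List.replicate i false with hw'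
  have hn : w'.count false = i + w.count false := by
    simp [hw', List.count_append, List.count_replicate]; omega
  have hm : w'.count true = w.count true := by
    simp [hw', List.count_append, List.count_replicate]
  have h0 : Nat.card ((wordGraph w').Coloring (Fin t)) =
      ∑ g : Fin (w'.count true + 1) → Fin t,
        ∏ i' : Fin (w'.count false + 1), filtCard t (lamW w' i') g :=
    card_colorings (w'.count false) (w'.count true) t (fun i => lamW w' i)
  rw [h0]
  have step : ∀ g : Fin (w'.count true + 1) → Fin t,
      (∏ i' : Fin (w'.count false + 1), filtCard t (lamW w' i') g)
        = (t - (Finset.univ.image g).card) ^ (i+1)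
            * Rfun t (w.count false) (Tw w) g := by
    intro g
    rw [Fin.prod_univ_eq_prod_range (fun j => filtCard t (lamW w' j) g)]
    rw [show w'.count false + 1 = (i+1) + w.count false by omega]
    rw [Finset.prod_range_add]
    have A : ∀ j ∈ range (i+1),
        filtCard t (lamW w' j) g = t - (univ.image g).card := by
      intro j hj
      rw [lamW_rep_lt w i j (mem_range.mp hj)]
      exact filtCard_ge t _ _ (by omega) g
    have B : ∀ j ∈ range (w.count false),
        filtCard t (lamW w' ((i+1) + j)) g = filtCard t ((Tw w).getD j 0) g :=
      fun j _ => by rw [lamW_rep_ge]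
    rw [Finset.prod_congr rfl A, Finset.prod_const, Finset.card_range,
        Finset.prod_congr rfl B]
    rfl
  rw [Finset.sum_congr rfl (fun g _ => step g)]
  exact sum_shape t (i+1) (w.count false) (Tw w) (by rw [hm])

lemma Q_eq (w : List Bool) (k t : ℕ) (hk : 1 ≤ k) :
    Nat.card ((wordGraph (w ++ true :: List.replicate (k-1) false)).Coloring (Fin t)) =
      ∑ g : Fin (w.count true + 2) → Fin t,
        (t - (Finset.univ.image g).card) ^ k * Rfun t (w.count false) (Tw w) g := by
  set w' := w ++ true :: List.replicate (k-1) false with hw'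
  have hn : w'.count false = (k - 1) + w.count false := by
    simp [hw', List.count_append, List.count_replicate, List.count_cons]; omega
  have hm : w'.count true = w.count true + 1 := by
    simp [hw', List.count_append, List.count_replicate, List.count_cons]
  have h0 : Nat.card ((wordGraph w').Coloring (Fin t)) =
      ∑ g : Fin (w'.count true + 1) → Fin t,
        ∏ i' : Fin (w'.count false + 1), filtCard t (lamW w' i') g :=
    card_colorings (w'.count false) (w'.count true) t (fun i => lamW w' i)
  rw [h0]
  have step : ∀ g : Fin (w'.count true + 1) → Fin t,
      (∏ i' : Fin (w'.count false + 1), filtCard t (lamW w' i') g)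
        = (t - (Finset.univ.image g).card) ^ k
            * Rfun t (w.count false) (Tw w) g := by
    intro g
    rw [Fin.prod_univ_eq_prod_range (fun j => filtCard t (lamW w' j) g)]
    rw [show w'.count false + 1 = k + w.count false by omega]
    rw [Finset.prod_range_add]
    have A : ∀ j ∈ range k,
        filtCard t (lamW w' j) g = t - (univ.image g).card := by
      intro j hj
      rw [lamW_brep_lt w k j hk (mem_range.mp hj)]
      exact filtCard_ge t _ _ (by omega) g
    have B : ∀ j ∈ range (w.count false),
        filtCard t (lamW w' (k + j)) g = filtCard t ((Tw w).getD j 0) g :=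
      fun j _ => by rw [lamW_brep_ge w k j hk]
    rw [Finset.prod_congr rfl A, Finset.prod_const, Finset.card_range,
        Finset.prod_congr rfl B]
    rfl
  rw [Finset.sum_congr rfl (fun g _ => step g)]
  exact sum_shape t k (w.count false) (Tw w) (by rw [hm])

def snocE (q t : ℕ) : ((Fin q → Fin t) × Fin t) ≃ (Fin (q+1) → Fin t) where
  toFun p := Fin.snoc p.1 p.2
  invFun h := (fun j => h j.castSucc, h (Fin.last q))
  left_inv p := by ext j <;> simp
  right_inv h := by
    funext j
    cases j using Fin.lastCases with
    | last => exact Fin.snoc_last _ _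
    | cast j => exact Fin.snoc_castSucc _ _ _

lemma snoc_sum {q t : ℕ} (F : (Fin (q+1) → Fin t) → ℤ) :
    (∑ g' : Fin (q+1) → Fin t, F g')
      = ∑ g : Fin q → Fin t, ∑ x : Fin t, F (Fin.snoc g x) := by
  rw [← (Fintype.sum_equiv (snocE q t) (fun p => F (Fin.snoc p.1 p.2)) F (fun p => rfl))]
  exact Fintype.sum_prod_type _

lemma sum_x {q t : ℕ} (k : ℕ) (g : Fin q → Fin t) :
    (∑ x : Fin t,
        ((t : ℤ) - ((univ.image (Fin.snoc g x : Fin (q+1) → Fin t)).card : ℕ)) ^ k)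
      = ((univ.image g).card : ℤ) * ((t:ℤ) - (univ.image g).card) ^ k
        + ((t:ℤ) - (univ.image g).card) * ((t:ℤ) - (univ.image g).card - 1) ^ k := by
  set S := univ.image g with hS
  have hsle : S.card ≤ t := le_trans (Finset.card_le_univ _) (by simp)
  have hcard : ∀ x : Fin t,
      ((univ.image (Fin.snoc g x : Fin (q+1) → Fin t)).card : ℤ)
        = if x ∈ S then (S.card : ℤ) else (S.card : ℤ) + 1 := by
    intro x
    rw [image_snoc]
    by_cases h : x ∈ S
    · rw [if_pos h, Finset.insert_eq_self.mpr h]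
    · rw [if_neg h, Finset.card_insert_of_notMem h]; push_cast; ring
  rw [← Finset.sum_filter_add_sum_filter_not univ (· ∈ S)]
  congr 1
  · rw [Finset.sum_congr rfl (fun x hx => by
      rw [hcard x, if_pos (mem_filter.mp hx).2])]
    rw [Finset.sum_const, filter_mem_eq_inter, univ_inter, nsmul_eq_mul]
  · rw [Finset.sum_congr rfl (fun x hx => by
      rw [hcard x, if_neg (mem_filter.mp hx).2])]
    rw [Finset.sum_const, Finset.filter_not, filter_mem_eq_inter, univ_inter,
      Finset.card_sdiff_of_subset (Finset.subset_univ _), Finset.card_univ, Fintype.card_fin,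
      nsmul_eq_mul, Nat.cast_sub hsle]
    ring_nf


/-- The chromatic polynomials of Ferrers graphs satisfy
`χ(w b a^{k−1}) = t·χ(w a^{k−1}) + Σ_{i=0}^{k−1} (−1)^{k−i} C(k,i) χ(w a^i)`,
expressed by counting proper colorings with `t` colors for every `t : ℕ`. -/
theorem stmt17 (w : List Bool) (k : ℕ) (hk : 1 ≤ k) (t : ℕ) :
    (Nat.card ((wordGraph (w ++ true :: List.replicate (k-1) false)).Coloring
        (Fin t)) : ℤ) =
      (t : ℤ) * Nat.card ((wordGraph (w ++ List.replicate (k-1) false)).Coloring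
        (Fin t)) +
      ∑ i ∈ Finset.range k, (-1 : ℤ) ^ (k - i) * (Nat.choose k i) *
        Nat.card ((wordGraph (w ++ List.replicate i false)).Coloring (Fin t)) := by
  have hsle : ∀ {q : ℕ} (g : Fin q → Fin t), (univ.image g).card ≤ t :=
    fun g => le_trans (Finset.card_le_univ _) (by simp)
  have cast_sum : ∀ (r q : ℕ),
      ((∑ g : Fin q → Fin t,
          (t - (Finset.univ.image g).card) ^ r * Rfun t (w.count false) (Tw w) g : ℕ) : ℤ)
        = ∑ g : Fin q → Fin t,
            ((t : ℤ) - ((Finset.univ.image g).card : ℕ)) ^ r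
              * (Rfun t (w.count false) (Tw w) g : ℕ) := by
    intro r q
    push_cast
    exact Finset.sum_congr rfl fun g _ => by rw [Nat.cast_sub (hsle g)]
  rw [Q_eq w k t hk, P_eq w (k-1) t, cast_sum, cast_sum,
    Finset.sum_congr (rfl : Finset.range k = Finset.range k)
      (fun i _ => by rw [P_eq w i t, cast_sum])]
  rw [show k - 1 + 1 = k from Nat.sub_add_cancel hk]
  rw [snoc_sum (q := w.count true + 1), Finset.mul_sum]
  have hrhs : ∀ i ∈ range k, (-1 : ℤ) ^ (k - i) * (Nat.choose k i) *
      (∑ g : Fin (w.count true + 1) → Fin t,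
        ((t : ℤ) - ((Finset.univ.image g).card : ℕ)) ^ (i+1)
          * (Rfun t (w.count false) (Tw w) g : ℕ))
      = ∑ g : Fin (w.count true + 1) → Fin t,
          (-1 : ℤ) ^ (k - i) * (Nat.choose k i) *
            (((t : ℤ) - ((Finset.univ.image g).card : ℕ)) ^ (i+1)
              * (Rfun t (w.count false) (Tw w) g : ℕ)) :=
    fun i _ => Finset.mul_sum _ _ _
  rw [Finset.sum_congr rfl hrhs]
  conv_rhs => rw [Finset.sum_comm]
  rw [← Finset.sum_add_distrib]
  refine Finset.sum_congr rfl fun g _ => ?_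
  calc ∑ x : Fin t,
        ((t : ℤ) - ((Finset.univ.image (Fin.snoc g x : Fin (w.count true + 1 + 1) → Fin t)).card : ℕ)) ^ k
          * (Rfun t (w.count false) (Tw w) (Fin.snoc g x) : ℕ)
      = (∑ x : Fin t,
          ((t : ℤ) - ((Finset.univ.image (Fin.snoc g x : Fin (w.count true + 1 + 1) → Fin t)).card : ℕ)) ^ k)
          * ((Rfun t (w.count false) (Tw w) g : ℕ) : ℤ) := by
        rw [Finset.sum_mul]
        exact Finset.sum_congr rfl fun x _ => by
          rw [Rfun_snoc t (w.count false) (Tw w) (fun idx => Tw_le w idx) g x]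
    _ = (((univ.image g).card : ℤ) * ((t:ℤ) - (univ.image g).card) ^ k
          + ((t:ℤ) - (univ.image g).card) * ((t:ℤ) - (univ.image g).card - 1) ^ k)
          * ((Rfun t (w.count false) (Tw w) g : ℕ) : ℤ) := by rw [sum_x]
    _ = _ := by
        rw [scalar_id t ((univ.image g).card) k (hsle g), add_mul, Finset.sum_mul]
        congr 1
        · ring
        · exact Finset.sum_congr rfl fun i _ => by ring
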